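/- arXiv:2008.04655 — 6 statements merged into one kernel-verified Lean document; each statement's English description precedes it below -/
import Mathlib

section
/- For n ≥ 3, if A is an n×n×n line-stochastic tensor with all entries in {0,1}, then (1/n)·A is not an extreme point of the polytope of n×n×n plane-stochastic tensors. -/
/-- An `n × n × n` tensor is line-stochastic: nonnegative and all line sums equal 1. -/
def IsLineStochastic (n : ℕ) (A : Fin n → Fin n → Fin n → ℝ) : Prop :=
  (∀ i j k, 0 ≤ A i j k) ∧
  (∀ j k, ∑ i, A i j k = 1) ∧
  (∀ i k, ∑ j, A i j k = 1) ∧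
  (∀ i j, ∑ k, A i j k = 1)

/-- An `n × n × n` tensor is plane-stochastic: nonnegative and all plane sums equal 1. -/
def IsPlaneStochastic (n : ℕ) (A : Fin n → Fin n → Fin n → ℝ) : Prop :=
  (∀ i j k, 0 ≤ A i j k) ∧
  (∀ k, ∑ i, ∑ j, A i j k = 1) ∧
  (∀ i, ∑ j, ∑ k, A i j k = 1) ∧
  (∀ j, ∑ i, ∑ k, A i j k = 1)

/-- `x` is an extreme point of the convex set `K`. -/
def IsExtremePt {E : Type*} [AddCommGroup E] [Module ℝ E] (K : Set E) (x : E) : Prop :=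
  x ∈ K ∧ ∀ e ∈ K, ∀ f ∈ K, ∀ r : ℝ, 0 < r → r < 1 →
    x = r • e + (1 - r) • f → e = f

/-!
Every line of `A` sums to `1`, so `x = A / n` is plane-stochastic, and so is
`x + t • (d i j * A i j k)` for small `|t|` whenever the matrix `d` has zero row sums, zero column
sums and zero colour sums `∑ i j, d i j * A i j k`. These `3 n` linear conditions have rank at most
`3 n - 2 < n ^ 2`, so a nonzero `d` exists, and `x` is the midpoint of the two distinct
plane-stochastic tensors `x ± t • (d i j * A i j k)`.
-/

open Module Finset

theorem Module.Dual.exists_ne_zero_forall_eq_zero_of_card_lt_finrank {K V κ : Type*} [Field K]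
    [AddCommGroup V] [Module K V] [FiniteDimensional K V] [Fintype κ] (L : κ → Dual K V)
    (h : Fintype.card κ < finrank K V) : ∃ v ≠ 0, ∀ a, L a v = 0 := by
  obtain ⟨v, hv, hv0⟩ := (Submodule.ne_bot_iff _).mp <|
    (LinearMap.pi L).ker_ne_bot_of_finrank_lt (by rwa [finrank_fintype_fun_eq_card])
  exact ⟨v, hv0, fun a => congrFun (LinearMap.mem_ker.mp hv) a⟩

theorem exists_ne_zero_sums_eq_zero {ι : Type*} [Fintype ι] [DecidableEq ι]
    (hι : 3 ≤ Fintype.card ι) (w : ι → ι → ι → ℝ) (hw : ∀ i j, ∑ k, w i j k = 1) :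
    ∃ d : ι → ι → ℝ, d ≠ 0 ∧ (∀ i, ∑ j, d i j = 0) ∧ (∀ j, ∑ i, d i j = 0) ∧
      ∀ k, ∑ i, ∑ j, d i j * w i j k = 0 := by
  obtain ⟨o⟩ : Nonempty ι := Fintype.card_pos_iff.mp (by omega)
  let entry (i j : ι) : Dual ℝ (ι → ι → ℝ) := LinearMap.proj j ∘ₗ LinearMap.proj i
  -- The column and colour constraints at `o` follow from the row constraints, so it suffices
  -- to impose the remaining `3 n - 2 < n ^ 2` ones.
  let L : ι ⊕ {j // j ≠ o} ⊕ {k // k ≠ o} → Dual ℝ (ι → ι → ℝ) :=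
    Sum.elim (fun i => ∑ j, entry i j) <| Sum.elim (fun j => ∑ i, entry i j)
      fun k => ∑ i, ∑ j, w i j k • entry i j
  have hcard : Fintype.card (ι ⊕ {j // j ≠ o} ⊕ {k // k ≠ o}) < finrank ℝ (ι → ι → ℝ) := by
    rw [Module.finrank_pi_fintype]
    simp only [Fintype.card_sum, Fintype.card_subtype_compl, Fintype.card_unique,
      finrank_fintype_fun_eq_card, sum_const, card_univ, smul_eq_mul]
    have := Nat.mul_le_mul_right (Fintype.card ι) hι
    omega
  obtain ⟨d, hd0, hL⟩ := Dual.exists_ne_zero_forall_eq_zero_of_card_lt_finrank L hcard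
  have hrow (i : ι) : ∑ j, d i j = 0 := by simpa [L, entry] using hL (.inl i)
  have htotal : ∑ j, ∑ i, d i j = 0 := by rw [sum_comm]; simp [hrow]
  have hcol (j : ι) : ∑ i, d i j = 0 := by
    rcases eq_or_ne j o with rfl | hj
    · rwa [sum_eq_single j fun j' _ hj' => by simpa [L, entry] using hL (.inr (.inl ⟨j', hj'⟩))]
        at htotal
      simp
    · simpa [L, entry] using hL (.inr (.inl ⟨j, hj⟩))
  have hcolour_total : ∑ k, ∑ i, ∑ j, d i j * w i j k = 0 := by
    calc ∑ k, ∑ i, ∑ j, d i j * w i j k = ∑ i, ∑ j, d i j * ∑ k, w i j k := by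
          simp_rw [mul_sum]; rw [sum_comm]; exact sum_congr rfl fun i _ => sum_comm
      _ = 0 := by simp [hw, hrow]
  refine ⟨d, hd0, hrow, hcol, fun k => ?_⟩
  rcases eq_or_ne k o with rfl | hk
  · rwa [sum_eq_single k fun k' _ hk' => by
      simpa [L, entry, mul_comm] using hL (.inr (.inr ⟨k', hk'⟩))] at hcolour_total
    simp
  · simpa [L, entry, mul_comm] using hL (.inr (.inr ⟨k, hk⟩))

theorem not_isExtremePt_of_add_mem_of_sub_mem {E : Type*} [AddCommGroup E] [Module ℝ E]
    {K : Set E} {x v : E} (hv : v ≠ 0) (hadd : x + v ∈ K) (hsub : x - v ∈ K) :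
    ¬ IsExtremePt K x := by
  intro hx
  have h := hx.2 _ hadd _ hsub (1 / 2) (by norm_num) (by norm_num) (by module)
  have h2 : (2 : ℝ) • v = 0 := by linear_combination (norm := module) h
  exact hv ((smul_eq_zero.mp h2).resolve_left two_ne_zero)

theorem exists_pos_forall_abs_mul_le {α : Type*} [Fintype α] (f : α → ℝ) {b : ℝ} (hb : 0 < b) :
    ∃ t > 0, ∀ a, |t * f a| ≤ b := by
  refine ⟨b / (‖f‖ + 1), by positivity, fun a => ?_⟩
  have hfa : |f a| ≤ ‖f‖ := norm_le_pi_norm f a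
  rw [abs_mul, abs_of_pos (by positivity), div_mul_eq_mul_div, div_le_iff₀ (by positivity)]
  gcongr
  linarith

namespace IsLineStochastic

variable {n : ℕ} {A : Fin n → Fin n → Fin n → ℝ}

theorem isPlaneStochastic_add_smul (hA : IsLineStochastic n A) {d : Fin n → Fin n → ℝ}
    (hrow : ∀ i, ∑ j, d i j = 0) (hcol : ∀ j, ∑ i, d i j = 0)
    (hcolour : ∀ k, ∑ i, ∑ j, d i j * A i j k = 0) {t : ℝ} (ht : ∀ i j, |t * d i j| ≤ 1 / n) :
    IsPlaneStochastic n
      ((fun i j k => 1 / (n : ℝ) * A i j k) + t • fun i j k => d i j * A i j k) := by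
  obtain ⟨hnonneg, hfirst, -, hline⟩ := hA
  have hplane (k : Fin n) : ∑ i, ∑ j, A i j k = n := by rw [sum_comm]; simp [hfirst]
  have hfiber (i j : Fin n) :
      ∑ k, (1 / (n : ℝ) * A i j k + t * (d i j * A i j k)) = 1 / n + t * d i j := by
    simp [sum_add_distrib, ← mul_sum, hline]
  refine ⟨fun i j k => ?_, fun k => ?_, fun i => ?_, fun j => ?_⟩
  · have := (abs_le.mp (ht i j)).1
    show 0 ≤ 1 / (n : ℝ) * A i j k + t * (d i j * A i j k)
    rw [← mul_assoc, ← add_mul]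
    exact mul_nonneg (by linarith) (hnonneg i j k)
  · have hn : (n : ℝ) ≠ 0 := Nat.cast_ne_zero.mpr k.pos.ne'
    show ∑ i, ∑ j, (1 / (n : ℝ) * A i j k + t * (d i j * A i j k)) = 1
    simp only [sum_add_distrib, ← mul_sum, hcolour, hplane k, mul_zero, add_zero]
    field_simp
  · have hn : (n : ℝ) ≠ 0 := Nat.cast_ne_zero.mpr i.pos.ne'
    show ∑ j, ∑ k, (1 / (n : ℝ) * A i j k + t * (d i j * A i j k)) = 1
    simp only [hfiber, sum_add_distrib, ← mul_sum, hrow, mul_zero, add_zero, sum_const, card_univ,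
      Fintype.card_fin, nsmul_eq_mul]
    field_simp
  · have hn : (n : ℝ) ≠ 0 := Nat.cast_ne_zero.mpr j.pos.ne'
    show ∑ i, ∑ k, (1 / (n : ℝ) * A i j k + t * (d i j * A i j k)) = 1
    simp only [hfiber, sum_add_distrib, ← mul_sum, hcol, mul_zero, add_zero, sum_const, card_univ,
      Fintype.card_fin, nsmul_eq_mul]
    field_simp

end IsLineStochastic

theorem stmt_5_general (n : ℕ) (hn : 3 ≤ n) (A : Fin n → Fin n → Fin n → ℝ)
    (hA : IsLineStochastic n A) :
    ¬ IsExtremePt {B : Fin n → Fin n → Fin n → ℝ | IsPlaneStochastic n B}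
        (fun i j k => (1 / (n : ℝ)) * A i j k) := by
  obtain ⟨d, hd0, hrow, hcol, hcolour⟩ :=
    exists_ne_zero_sums_eq_zero (by simpa using hn) A hA.2.2.2
  obtain ⟨t, ht0, ht⟩ :=
    exists_pos_forall_abs_mul_le (Function.uncurry d) (b := 1 / n) (by positivity)
  have hv : (fun i j k => d i j * A i j k) ≠ 0 := by
    obtain ⟨i, j, hij⟩ : ∃ i j, d i j ≠ 0 := by simpa [funext_iff] using hd0
    obtain ⟨k, -, hk⟩ := exists_ne_zero_of_sum_ne_zero (s := univ) (f := A i j)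
      (by simp [hA.2.2.2 i j])
    exact fun h => mul_ne_zero hij hk (congrFun (congrFun (congrFun h i) j) k)
  refine not_isExtremePt_of_add_mem_of_sub_mem (smul_ne_zero ht0.ne' hv)
    (hA.isPlaneStochastic_add_smul hrow hcol hcolour fun i j => ht (i, j)) ?_
  rw [sub_eq_add_neg, ← neg_smul]
  exact hA.isPlaneStochastic_add_smul hrow hcol hcolour fun i j => by simpa using ht (i, j)

theorem stmt_5 (n : ℕ) (hn : 3 ≤ n) (A : Fin n → Fin n → Fin n → ℝ)
    (hA : IsLineStochastic n A) (h01 : ∀ i j k, A i j k = 0 ∨ A i j k = 1) :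
    ¬ IsExtremePt {B : Fin n → Fin n → Fin n → ℝ | IsPlaneStochastic n B}
        (fun i j k => (1 / (n : ℝ)) * A i j k) :=
  stmt_5_general n hn A hA
end

section
/- The polytope of n×n×n plane-stochastic tensors has at least (n!)² extreme points. -/
/-! Each pair of permutations `σ, τ` gives a `0`-`1` plane-stochastic tensor with its ones at
`(i, σ i, τ i)`, and distinct pairs give distinct tensors. Such a tensor is extreme because every
entry of a plane-stochastic tensor lies in `[0, 1]`, and `0` and `1` are not proper convex
combinations of two distinct points of `[0, 1]`. -/

open Finset

def permTensor {n : ℕ} (σ τ : Equiv.Perm (Fin n)) : Fin n → Fin n → Fin n → ℝ :=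
  fun i j k => if j = σ i ∧ k = τ i then 1 else 0

lemma Equiv.Perm.sum_ite_eq_apply {α M : Type*} [Fintype α] [DecidableEq α]
    [AddCommMonoidWithOne M] (σ : Equiv.Perm α) (a : α) :
    ∑ x, (if a = σ x then (1 : M) else 0) = 1 := by
  rw [Equiv.sum_comp σ (fun y => if a = y then (1 : M) else 0), sum_ite_eq, if_pos (mem_univ a)]

section PermTensor

variable {n : ℕ} (σ τ : Equiv.Perm (Fin n))

lemma sum_permTensor_right (i j : Fin n) :
    ∑ k, permTensor σ τ i j k = if j = σ i then 1 else 0 := by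
  simp [permTensor, ite_and]

lemma sum_permTensor_middle (i k : Fin n) :
    ∑ j, permTensor σ τ i j k = if k = τ i then 1 else 0 := by
  simp [permTensor, ite_and]

lemma permTensor_isPlaneStochastic : IsPlaneStochastic n (permTensor σ τ) := by
  refine ⟨fun i j k => by unfold permTensor; positivity, fun k => ?_, fun i => ?_, fun j => ?_⟩
  · simp only [sum_permTensor_middle, τ.sum_ite_eq_apply]
  · simp [sum_permTensor_right]
  · simp only [sum_permTensor_right, σ.sum_ite_eq_apply]

lemma permTensor_eq_zero_or_one (i j k : Fin n) :
    permTensor σ τ i j k = 0 ∨ permTensor σ τ i j k = 1 := by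
  unfold permTensor
  split_ifs <;> simp

lemma permTensor_injective :
    Function.Injective fun p : Equiv.Perm (Fin n) × Equiv.Perm (Fin n) => permTensor p.1 p.2 := by
  rintro ⟨σ, τ⟩ ⟨σ', τ'⟩ h
  have hsupp (i : Fin n) : σ i = σ' i ∧ τ i = τ' i := by
    have hi : permTensor σ' τ' i (σ i) (τ i) = 1 := by
      rw [← show permTensor σ τ = permTensor σ' τ' from h]
      simp [permTensor]
    by_contra hne
    simp [permTensor, hne] at hi
  exact Prod.ext (Equiv.ext fun i => (hsupp i).1) (Equiv.ext fun i => (hsupp i).2)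

end PermTensor

lemma IsPlaneStochastic.le_one {n : ℕ} {A : Fin n → Fin n → Fin n → ℝ}
    (hA : IsPlaneStochastic n A) (i j k : Fin n) : A i j k ≤ 1 := by
  obtain ⟨hnonneg, -, hplane, -⟩ := hA
  calc A i j k ≤ ∑ k', A i j k' := single_le_sum (fun k' _ => hnonneg i j k') (mem_univ k)
    _ ≤ ∑ j', ∑ k', A i j' k' :=
        single_le_sum (f := fun j' => ∑ k', A i j' k')
          (fun j' _ => sum_nonneg fun k' _ => hnonneg i j' k') (mem_univ j)
    _ = 1 := hplane i

lemma eq_of_endpoint_eq_convex_combination {a b r x : ℝ} (ha : a ∈ Set.Icc (0 : ℝ) 1)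
    (hb : b ∈ Set.Icc (0 : ℝ) 1) (hr₀ : 0 < r) (hr₁ : r < 1) (hx : x = 0 ∨ x = 1)
    (h : x = r * a + (1 - r) * b) : a = b := by
  obtain ⟨ha₀, ha₁⟩ := ha
  obtain ⟨hb₀, hb₁⟩ := hb
  rcases hx with rfl | rfl <;> nlinarith

lemma isExtremePt_of_eq_zero_or_one {n : ℕ} {A : Fin n → Fin n → Fin n → ℝ}
    (hA : IsPlaneStochastic n A) (h01 : ∀ i j k, A i j k = 0 ∨ A i j k = 1) :
    IsExtremePt {B | IsPlaneStochastic n B} A := by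
  refine ⟨hA, fun e he f hf r hr₀ hr₁ hcomb => ?_⟩
  funext i j k
  refine eq_of_endpoint_eq_convex_combination ⟨he.1 i j k, he.le_one i j k⟩
    ⟨hf.1 i j k, hf.le_one i j k⟩ hr₀ hr₁ (h01 i j k) ?_
  simpa using congrFun (congrFun (congrFun hcomb i) j) k

theorem stmt_11 (n : ℕ) :
    ∃ S : Finset (Fin n → Fin n → Fin n → ℝ),
      (∀ A ∈ S, IsExtremePt {B : Fin n → Fin n → Fin n → ℝ | IsPlaneStochastic n B} A) ∧
      (Nat.factorial n) ^ 2 ≤ S.card := by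
  refine ⟨univ.image fun p : Equiv.Perm (Fin n) × Equiv.Perm (Fin n) => permTensor p.1 p.2,
    ?_, ?_⟩
  · simp only [mem_image, mem_univ, true_and, forall_exists_index]
    rintro A ⟨σ, τ⟩ rfl
    exact isExtremePt_of_eq_zero_or_one (permTensor_isPlaneStochastic σ τ)
      (permTensor_eq_zero_or_one σ τ)
  · rw [card_image_of_injective _ permTensor_injective, card_univ, Fintype.card_prod,
      Fintype.card_perm, Fintype.card_fin, sq]
end

section
/- The rank of the 3n²×n³ coefficient matrix L of the linear system defining n×n×n line-stochastic tensors equals 3n² − 3n + 1. -/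
/-- The `3n² × n³` coefficient matrix of the line-sum constraints defining
`n × n × n` line-stochastic tensors.  Rows of type `0` encode `∑ᵢ a_{ijk} = 1` (pair `(j,k)`),
rows of type `1` encode `∑ⱼ a_{ijk} = 1` (pair `(i,k)`), and rows of type `2` encode
`∑ₖ a_{ijk} = 1` (pair `(i,j)`). -/
def lineCoeffMatrix (n : ℕ) :
    Matrix (Fin 3 × Fin n × Fin n) (Fin n × Fin n × Fin n) ℝ :=
  fun r c =>
    if (r.1 = 0 ∧ c.2.1 = r.2.1 ∧ c.2.2 = r.2.2) ∨
       (r.1 = 1 ∧ c.1 = r.2.1 ∧ c.2.2 = r.2.2) ∨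
       (r.1 = 2 ∧ c.1 = r.2.1 ∧ c.2.1 = r.2.2) then 1 else 0


/-!
The rank is `3n²` minus the dimension of the left kernel of `L`. A vector `(u, v, w)` lies in the
left kernel iff `u_{jk} + v_{ik} + w_{ij} = 0` for all `i, j, k`, and the solutions are exactly the
"potentials" `u_{jk} = c_k - b_j`, `v_{ik} = a_i - c_k`, `w_{ij} = b_j - a_i` with
`(a, b, c) ∈ (ℝⁿ)³`. Two triples give the same potential iff they differ by a common constant,
so the left kernel has dimension `3n - 1`.
-/
open Matrix Module

lemma Matrix.rank_add_finrank_ker_transpose_mulVecLin {m n K : Type*} [Fintype m] [Fintype n]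
    [Field K] (A : Matrix m n K) :
    A.rank + finrank K (LinearMap.ker Aᵀ.mulVecLin) = Fintype.card m := by
  rw [← rank_transpose, Matrix.rank, LinearMap.finrank_range_add_finrank_ker,
    finrank_fintype_fun_eq_card]

lemma lineCoeffMatrix_transpose_mulVec (n : ℕ) (y : Fin 3 × Fin n × Fin n → ℝ) (i j k : Fin n) :
    ((lineCoeffMatrix n)ᵀ *ᵥ y) (i, j, k) = y (0, j, k) + y (1, i, k) + y (2, i, j) := by
  simp only [mulVec, transpose_apply, lineCoeffMatrix, dotProduct, Fintype.sum_prod_type,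
    Fin.sum_univ_three]
  simp [ite_and, eq_comm, Finset.sum_ite_eq]

lemma mem_ker_lineCoeffMatrix_transpose_iff (n : ℕ) (y : Fin 3 × Fin n × Fin n → ℝ) :
    y ∈ LinearMap.ker (lineCoeffMatrix n)ᵀ.mulVecLin ↔
      ∀ i j k, y (0, j, k) + y (1, i, k) + y (2, i, j) = 0 := by
  simp only [LinearMap.mem_ker, mulVecLin_apply, funext_iff, Prod.forall,
    lineCoeffMatrix_transpose_mulVec, Pi.zero_apply]

def linePotential (n : ℕ) :
    (Fin n → ℝ) × (Fin n → ℝ) × (Fin n → ℝ) →ₗ[ℝ] (Fin 3 × Fin n × Fin n → ℝ) where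
  toFun x
    | (0, j, k) => x.2.2 k - x.2.1 j
    | (1, i, k) => x.1 i - x.2.2 k
    | (2, i, j) => x.2.1 j - x.1 i
  map_add' x y := by
    funext ⟨t, _, _⟩
    fin_cases t <;>
      simp only [Fin.zero_eta, Fin.mk_one, Fin.reduceFinMk, Prod.fst_add, Prod.snd_add,
        Pi.add_apply] <;> ring
  map_smul' c x := by
    funext ⟨t, _, _⟩
    fin_cases t <;>
      simp only [Fin.zero_eta, Fin.mk_one, Fin.reduceFinMk, Prod.smul_fst, Prod.smul_snd,
        Pi.smul_apply, smul_eq_mul, RingHom.id_apply] <;> ring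

section linePotential

variable {n : ℕ} (x : (Fin n → ℝ) × (Fin n → ℝ) × (Fin n → ℝ)) (a b : Fin n)

@[simp] lemma linePotential_apply_zero : linePotential n x (0, a, b) = x.2.2 b - x.2.1 a := rfl
@[simp] lemma linePotential_apply_one : linePotential n x (1, a, b) = x.1 a - x.2.2 b := rfl
@[simp] lemma linePotential_apply_two : linePotential n x (2, a, b) = x.2.1 b - x.1 a := rfl

end linePotential

lemma range_linePotential {n : ℕ} (hn : 0 < n) :
    LinearMap.range (linePotential n) = LinearMap.ker (lineCoeffMatrix n)ᵀ.mulVecLin := by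
  ext y
  rw [mem_ker_lineCoeffMatrix_transpose_iff]
  constructor
  · rintro ⟨x, rfl⟩ i j k
    simp only [linePotential_apply_zero, linePotential_apply_one, linePotential_apply_two]
    ring
  · intro hy
    let z : Fin n := ⟨0, hn⟩
    -- normalise the potential by `x.1 z = 0` and read it off the rows through `z`
    refine ⟨(fun i => y (2, z, z) - y (2, i, z), fun j => y (2, z, j), fun k => -y (1, z, k)), ?_⟩
    funext ⟨t, a, b⟩
    fin_cases t
    · change -y (1, z, b) - y (2, z, a) = y (0, a, b)
      linarith [hy z a b]
    · change y (2, z, z) - y (2, a, z) - -y (1, z, b) = y (1, a, b)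
      linarith [hy a z b, hy z z b]
    · change y (2, z, b) - (y (2, z, z) - y (2, a, z)) = y (2, a, b)
      linarith [hy a b z, hy z b z, hy a z z, hy z z z]

lemma ker_linePotential (n : ℕ) : LinearMap.ker (linePotential n) = ℝ ∙ 1 := by
  ext x
  rw [LinearMap.mem_ker, Submodule.mem_span_singleton]
  constructor
  · intro h
    obtain rfl | hn := n.eq_zero_or_pos
    · exact ⟨0, Subsingleton.elim _ _⟩
    have h0 (j k) : x.2.2 k = x.2.1 j := by simpa [sub_eq_zero] using congrFun h (0, j, k)
    have h1 (i k) : x.1 i = x.2.2 k := by simpa [sub_eq_zero] using congrFun h (1, i, k)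
    let z : Fin n := ⟨0, hn⟩
    refine ⟨x.1 z, ?_⟩
    ext i
    · simp [h1 i z, h1 z z]
    · simp [h1 z i, h0 i i]
    · simp [h1 z i]
  · rintro ⟨s, rfl⟩
    ext ⟨t, a, b⟩
    fin_cases t <;> simp

lemma finrank_ker_lineCoeffMatrix_transpose {n : ℕ} (hn : 0 < n) :
    finrank ℝ (LinearMap.ker (lineCoeffMatrix n)ᵀ.mulVecLin) = 3 * n - 1 := by
  have : NeZero n := ⟨hn.ne'⟩
  have rank_nullity := (linePotential n).finrank_range_add_finrank_ker
  rw [range_linePotential hn, ker_linePotential, finrank_span_singleton one_ne_zero,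
    finrank_prod, finrank_prod, finrank_fin_fun] at rank_nullity
  omega

theorem stmt_12 (n : ℕ) (hn : 0 < n) :
    (lineCoeffMatrix n).rank = 3 * n ^ 2 + 1 - 3 * n := by
  have rank_nullity := (lineCoeffMatrix n).rank_add_finrank_ker_transpose_mulVecLin
  rw [finrank_ker_lineCoeffMatrix_transpose hn, Fintype.card_prod, Fintype.card_prod,
    Fintype.card_fin, Fintype.card_fin] at rank_nullity
  have := Nat.le_mul_self n
  rw [sq]
  omega
end

section
/- The affine span of the set of n×n×n line-stochastic tensors in ℝ^{n³} has dimension (n−1)³. -/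
/-!
The difference of two line-stochastic tensors has all line sums zero, and conversely every
such tensor `W` is a multiple of a difference of line-stochastic tensors: the uniform tensor
`1/n` has positive entries, so `1/n + ε W` is still line-stochastic for small `ε ≠ 0`. Hence
the direction of the affine span is the space of tensors with zero line sums. Restriction to the
leading `(n-1) × (n-1) × (n-1)` block is an isomorphism from that space onto all such blocks:
a tensor with zero line sums is determined by the block, and any block extends by putting minus
the sum of the other entries in the last position of each line.
-/

open Finset Filter Topology

section SumZeroExtend

variable {M : Type*} [AddCommGroup M] {m : ℕ}

def sumZeroExtend (v : Fin m → M) : Fin (m + 1) → M :=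
  Fin.snoc v (-∑ i, v i)

@[simp]
lemma sumZeroExtend_castSucc (v : Fin m → M) (i : Fin m) :
    sumZeroExtend v i.castSucc = v i :=
  Fin.snoc_castSucc ..

@[simp]
lemma sumZeroExtend_last (v : Fin m → M) : sumZeroExtend v (Fin.last m) = -∑ i, v i :=
  Fin.snoc_last ..

lemma sum_sumZeroExtend (v : Fin m → M) : ∑ x, sumZeroExtend v x = 0 := by
  simp [Fin.sum_univ_castSucc]

lemma sumZeroExtend_apply {ι : Type*} (v : Fin m → ι → M) (x : Fin (m + 1)) (y : ι) :
    sumZeroExtend v x y = sumZeroExtend (fun i => v i y) x := by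
  induction x using Fin.lastCases <;> simp [Finset.sum_apply]

lemma sum_sumZeroExtend_apply {ι : Type*} [Fintype ι] {v : Fin m → ι → M}
    (h : ∀ i, ∑ y, v i y = 0) (x : Fin (m + 1)) : ∑ y, sumZeroExtend v x y = 0 := by
  induction x using Fin.lastCases with
  | last => simp [Finset.sum_apply, sum_comm (γ := ι), h]
  | cast i => simp [h]

lemma eq_zero_of_sum_eq_zero_of_castSucc {v : Fin (m + 1) → M} (hsum : ∑ x, v x = 0)
    (h : ∀ i : Fin m, v i.castSucc = 0) (x : Fin (m + 1)) : v x = 0 := by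
  induction x using Fin.lastCases with
  | last => simpa [Fin.sum_univ_castSucc, h] using hsum
  | cast i => exact h i

end SumZeroExtend

def lineSumZero (R : Type*) [Semiring R] (ι : Type*) [Fintype ι] :
    Submodule R (ι → ι → ι → R) where
  carrier := {A | (∀ j k, ∑ i, A i j k = 0) ∧ (∀ i k, ∑ j, A i j k = 0) ∧
    (∀ i j, ∑ k, A i j k = 0)}
  add_mem' := by
    rintro A B ⟨hA₁, hA₂, hA₃⟩ ⟨hB₁, hB₂, hB₃⟩
    refine ⟨?_, ?_, ?_⟩ <;> intro x y <;> simp [sum_add_distrib, *]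
  zero_mem' := by simp
  smul_mem' := by
    rintro c A ⟨h₁, h₂, h₃⟩
    refine ⟨?_, ?_, ?_⟩ <;> intro x y <;> simp [← mul_sum, *]

section Dimension

variable {K : Type*} [CommRing K] {m : ℕ}

def extendLineSumZero (B : Fin m → Fin m → Fin m → K) :
    Fin (m + 1) → Fin (m + 1) → Fin (m + 1) → K :=
  sumZeroExtend fun i => sumZeroExtend fun j => sumZeroExtend (B i j)

lemma extendLineSumZero_castSucc (B : Fin m → Fin m → Fin m → K) (i j k : Fin m) :
    extendLineSumZero B i.castSucc j.castSucc k.castSucc = B i j k := by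
  simp [extendLineSumZero]

lemma extendLineSumZero_mem (B : Fin m → Fin m → Fin m → K) :
    extendLineSumZero B ∈ lineSumZero K (Fin (m + 1)) := by
  have hk (i : Fin m) (j : Fin (m + 1)) :
      ∑ k, sumZeroExtend (fun j => sumZeroExtend (B i j)) j k = 0 :=
    sum_sumZeroExtend_apply (fun j => sum_sumZeroExtend (B i j)) j
  refine ⟨fun j k => ?_, fun i k => ?_, fun i j => ?_⟩ <;> unfold extendLineSumZero
  · simpa [Finset.sum_apply] using congr_fun₂ (sum_sumZeroExtend
      fun i => sumZeroExtend fun j => sumZeroExtend (B i j)) j k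
  · simpa [Finset.sum_apply] using congr_fun (sum_sumZeroExtend_apply
      (fun i => sum_sumZeroExtend fun j => sumZeroExtend (B i j)) i) k
  · simpa only [sumZeroExtend_apply _ _ j] using sum_sumZeroExtend_apply (hk · j) i

lemma eq_zero_of_mem_lineSumZero {A : Fin (m + 1) → Fin (m + 1) → Fin (m + 1) → K}
    (hA : A ∈ lineSumZero K (Fin (m + 1)))
    (h : ∀ i j k : Fin m, A i.castSucc j.castSucc k.castSucc = 0) : A = 0 := by
  obtain ⟨h₁, h₂, h₃⟩ := hA
  have hi (i : Fin (m + 1)) (j k : Fin m) : A i j.castSucc k.castSucc = 0 :=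
    eq_zero_of_sum_eq_zero_of_castSucc (h₁ _ _) (fun i => h i j k) i
  have hj (i j : Fin (m + 1)) (k : Fin m) : A i j k.castSucc = 0 :=
    eq_zero_of_sum_eq_zero_of_castSucc (h₂ _ _) (fun j => hi i j k) j
  funext i j k
  exact eq_zero_of_sum_eq_zero_of_castSucc (h₃ _ _) (fun k => hj i j k) k

def restrictLeadingBlock :
    (Fin (m + 1) → Fin (m + 1) → Fin (m + 1) → K) →ₗ[K]
      Fin m → Fin m → Fin m → K where
  toFun A i j k := A i.castSucc j.castSucc k.castSucc
  map_add' _ _ := rfl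
  map_smul' _ _ := rfl

lemma bijective_restrictLeadingBlock_comp_subtype :
    Function.Bijective (restrictLeadingBlock ∘ₗ (lineSumZero K (Fin (m + 1))).subtype) := by
  refine ⟨(injective_iff_map_eq_zero _).2 fun A hA => ?_, fun B => ?_⟩
  · exact Subtype.ext <| eq_zero_of_mem_lineSumZero A.2 fun i j k => congr_fun₃ hA i j k
  · exact ⟨⟨_, extendLineSumZero_mem B⟩, funext₃ (extendLineSumZero_castSucc B)⟩

lemma finrank_lineSumZero [Nontrivial K] (m : ℕ) :
    Module.finrank K (lineSumZero K (Fin (m + 1))) = m ^ 3 := by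
  rw [(LinearEquiv.ofBijective _ bijective_restrictLeadingBlock_comp_subtype).finrank_eq]
  simp [Module.finrank_pi_fintype]
  ring

end Dimension

lemma vectorSpan_eq_of_forall_add_smul_mem {k E : Type*} [DivisionRing k] [AddCommGroup E]
    [Module k E] {S : Set E} {W : Submodule k E} (hS : ∀ x ∈ S, ∀ y ∈ S, x - y ∈ W)
    {c : E} (hc : c ∈ S) (hW : ∀ w ∈ W, ∃ ε ≠ (0 : k), c + ε • w ∈ S) :
    vectorSpan k S = W := by
  refine le_antisymm ?_ fun w hw => ?_
  · rw [vectorSpan_def, Submodule.span_le]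
    rintro _ ⟨x, hx, y, hy, rfl⟩
    exact hS x hx y hy
  · obtain ⟨ε, hε, hmem⟩ := hW w hw
    have hw : w = ε⁻¹ • ((c + ε • w) -ᵥ c) := by
      rw [vsub_eq_sub, add_sub_cancel_left, inv_smul_smul₀ hε]
    rw [hw]
    exact Submodule.smul_mem _ _ (vsub_mem_vectorSpan k hmem hc)

lemma vectorSpan_setOf_isLineStochastic {n : ℕ} (hn : 0 < n) :
    vectorSpan ℝ {A | IsLineStochastic n A} = lineSumZero ℝ (Fin n) := by
  have hn' : (n : ℝ) * (n : ℝ)⁻¹ = 1 := mul_inv_cancel₀ (by positivity)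
  refine vectorSpan_eq_of_forall_add_smul_mem ?_ (c := fun _ _ _ => (n : ℝ)⁻¹) ?_ ?_
  · rintro A ⟨-, hA₁, hA₂, hA₃⟩ B ⟨-, hB₁, hB₂, hB₃⟩
    refine ⟨?_, ?_, ?_⟩ <;> intro x y <;> simp [sum_sub_distrib, *]
  · refine ⟨fun _ _ _ => by positivity, ?_, ?_, ?_⟩ <;> intro x y <;> simp [hn']
  · rintro W ⟨h₁, h₂, h₃⟩
    have hpos : ∀ᶠ ε in 𝓝 (0 : ℝ), ∀ i j k, 0 < (n : ℝ)⁻¹ + ε * W i j k := by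
      simp only [eventually_all]
      intro i j k
      exact continuousAt_const.eventually_lt (by fun_prop) (by simpa using hn)
    obtain ⟨ε, hε, hε₀⟩ :=
      ((hpos.filter_mono nhdsWithin_le_nhds).and self_mem_nhdsWithin).exists (f := 𝓝[≠] 0)
    refine ⟨ε, hε₀, fun i j k => (hε i j k).le, ?_, ?_, ?_⟩ <;> intro x y <;>
      simp [sum_add_distrib, ← mul_sum, *]

theorem stmt_14 (n : ℕ) (hn : 0 < n) :
    Module.finrank ℝ
      (affineSpan ℝ {A : Fin n → Fin n → Fin n → ℝ | IsLineStochastic n A}).direction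
      = (n - 1) ^ 3 := by
  obtain ⟨m, rfl⟩ := Nat.exists_eq_succ_of_ne_zero hn.ne'
  rw [direction_affineSpan, vectorSpan_setOf_isLineStochastic hn, finrank_lineSumZero]
  simp
end

section
/- The affine span of the set of n×n×n plane-stochastic tensors in ℝ^{n³} has dimension n³ − 3n + 2. -/
open Finset Filter Topology Module

section PlaneSums

variable (α β γ K : Type*) [Fintype α] [Fintype β] [Fintype γ]

def planeSums [CommSemiring K] :
    (α → β → γ → K) →ₗ[K] (α → K) × (β → K) × (γ → K) where
  toFun A := (fun a => ∑ b, ∑ c, A a b c, fun b => ∑ a, ∑ c, A a b c,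
    fun c => ∑ a, ∑ b, A a b c)
  map_add' A B := by simp only [Pi.add_apply, sum_add_distrib]; rfl
  map_smul' r A := by simp only [Pi.smul_apply, smul_eq_mul, ← mul_sum]; rfl

def sumDiffs [CommRing K] : (α → K) × (β → K) × (γ → K) →ₗ[K] K × K where
  toFun p := (∑ a, p.1 a - ∑ b, p.2.1 b, ∑ b, p.2.1 b - ∑ c, p.2.2 c)
  map_add' p q := by
    ext <;> simp only [Prod.fst_add, Prod.snd_add, Pi.add_apply, sum_add_distrib] <;> ring
  map_smul' r p := by ext <;> simp [← mul_sum, mul_sub]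

variable {α β γ K}

theorem planeSums_apply [CommSemiring K] (A : α → β → γ → K) :
    planeSums α β γ K A = (fun a => ∑ b, ∑ c, A a b c, fun b => ∑ a, ∑ c, A a b c,
      fun c => ∑ a, ∑ b, A a b c) := rfl

theorem sumDiffs_apply [CommRing K] (p : (α → K) × (β → K) × (γ → K)) :
    sumDiffs α β γ K p = (∑ a, p.1 a - ∑ b, p.2.1 b, ∑ b, p.2.1 b - ∑ c, p.2.2 c) := rfl

theorem sumDiffs_comp_planeSums [CommRing K] :
    sumDiffs α β γ K ∘ₗ planeSums α β γ K = 0 := by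
  ext A : 1
  have h₁ : ∑ b, ∑ a, ∑ c, A a b c = ∑ a, ∑ b, ∑ c, A a b c := sum_comm
  have h₂ : ∑ c, ∑ a, ∑ b, A a b c = ∑ a, ∑ b, ∑ c, A a b c := by
    rw [sum_comm]; exact sum_congr rfl fun a _ => sum_comm
  simp [sumDiffs_apply, planeSums_apply, h₁, h₂]

variable [Field K] [CharZero K]

theorem sumDiffs_surjective [Nonempty α] [Nonempty β] :
    Function.Surjective (sumDiffs α β γ K) := by
  rintro ⟨x, y⟩
  refine ⟨(fun _ => (x + y) / Fintype.card α, fun _ => y / Fintype.card β, 0), ?_⟩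
  simp [sumDiffs_apply, mul_div_cancel₀, Fintype.card_ne_zero]

theorem range_planeSums [Nonempty α] [Nonempty β] [Nonempty γ] :
    LinearMap.range (planeSums α β γ K) = LinearMap.ker (sumDiffs α β γ K) := by
  refine le_antisymm (LinearMap.range_le_ker_iff.2 sumDiffs_comp_planeSums) ?_
  rintro ⟨x, y, z⟩ h
  obtain ⟨hxy, hyz⟩ : ∑ a, x a = ∑ b, y b ∧ ∑ b, y b = ∑ c, z c := by
    simpa [sumDiffs_apply, sub_eq_zero] using h
  have hα : (Fintype.card α : K) ≠ 0 := by simp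
  have hβ : (Fintype.card β : K) ≠ 0 := by simp
  have hγ : (Fintype.card γ : K) ≠ 0 := by simp
  -- Each of the first three terms has the prescribed sums on its own family of planes and the
  -- common total `∑ a, x a` spread evenly over the other two; the last term cancels these.
  refine ⟨fun a b c => x a / (Fintype.card β * Fintype.card γ)
    + y b / (Fintype.card α * Fintype.card γ) + z c / (Fintype.card α * Fintype.card β)
    - 2 * (∑ a, x a) / (Fintype.card α * Fintype.card β * Fintype.card γ), ?_⟩
  rw [planeSums_apply]
  refine Prod.ext (funext fun a => ?_) (Prod.ext (funext fun b => ?_) (funext fun c => ?_)) <;>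
  · simp only [sum_add_distrib, sum_sub_distrib, sum_const, card_univ, nsmul_eq_mul, ← sum_div,
      ← mul_sum, ← hyz, ← hxy]
    field_simp
    ring

theorem finrank_ker_planeSums [Nonempty α] [Nonempty β] [Nonempty γ] :
    finrank K (LinearMap.ker (planeSums α β γ K)) =
      Fintype.card α * Fintype.card β * Fintype.card γ + 2
        - (Fintype.card α + Fintype.card β + Fintype.card γ) := by
  have h₁ := LinearMap.finrank_range_add_finrank_ker (sumDiffs α β γ K)
  have h₂ := LinearMap.finrank_range_add_finrank_ker (planeSums α β γ K)
  rw [LinearMap.range_eq_top.2 sumDiffs_surjective, finrank_top] at h₁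
  rw [range_planeSums] at h₂
  simp only [finrank_prod, finrank_self, finrank_pi_fintype, sum_const, card_univ, smul_eq_mul,
    mul_one, ← mul_assoc] at h₁ h₂
  omega

end PlaneSums

theorem le_vectorSpan_of_exists_smul_vadd_mem {k V P : Type*} [DivisionRing k] [AddCommGroup V]
    [Module k V] [AddTorsor V P] {s : Set P} {p : P} (hp : p ∈ s) {W : Submodule k V}
    (h : ∀ v ∈ W, ∃ t : k, t ≠ 0 ∧ t • v +ᵥ p ∈ s) : W ≤ vectorSpan k s := by
  intro v hv
  obtain ⟨t, ht, hts⟩ := h v hv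
  have := Submodule.smul_mem _ t⁻¹ (vsub_mem_vectorSpan k hts hp)
  rwa [vadd_vsub, inv_smul_smul₀ ht] at this

theorem isPlaneStochastic_iff {n : ℕ} {A : Fin n → Fin n → Fin n → ℝ} :
    IsPlaneStochastic n A ↔ (∀ i j k, 0 ≤ A i j k) ∧ planeSums _ _ _ ℝ A = 1 := by
  simp only [IsPlaneStochastic, planeSums_apply, Prod.ext_iff, funext_iff, Prod.fst_one,
    Prod.snd_one, Pi.one_apply]
  tauto

theorem isPlaneStochastic_const {n : ℕ} (hn : 0 < n) :
    IsPlaneStochastic n (fun _ _ _ => ((n : ℝ) ^ 2)⁻¹) := by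
  refine ⟨fun _ _ _ => by positivity, ?_, ?_, ?_⟩ <;>
  · intro
    simp [field]

theorem direction_affineSpan_setOf_isPlaneStochastic {n : ℕ} (hn : 0 < n) :
    (affineSpan ℝ {A | IsPlaneStochastic n A}).direction =
      LinearMap.ker (planeSums (Fin n) (Fin n) (Fin n) ℝ) := by
  have hU : (fun _ _ _ => ((n : ℝ) ^ 2)⁻¹) ∈ {A | IsPlaneStochastic n A} :=
    isPlaneStochastic_const hn
  rw [direction_affineSpan]
  refine le_antisymm ?_ (le_vectorSpan_of_exists_smul_vadd_mem hU ?_)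
  · rw [vectorSpan_def, Submodule.span_le]
    rintro _ ⟨A, hA, B, hB, rfl⟩
    simp [(isPlaneStochastic_iff.1 hA).2, (isPlaneStochastic_iff.1 hB).2]
  · intro B hB
    have hpos : ∀ᶠ t in 𝓝 (0 : ℝ), ∀ i j k, 0 < t * B i j k + ((n : ℝ) ^ 2)⁻¹ := by
      simp only [eventually_all]
      intro i j k
      have hc : (0 : ℝ) < ((n : ℝ) ^ 2)⁻¹ := by positivity
      exact ((continuous_mul_const _).add continuous_const).tendsto' 0 _ (by simp)
        |>.eventually (lt_mem_nhds hc)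
    obtain ⟨t, ht, ht0⟩ := ((hpos.filter_mono nhdsWithin_le_nhds).and
      (self_mem_nhdsWithin : {t : ℝ | t ≠ 0} ∈ 𝓝[≠] 0)).exists
    refine ⟨t, ht0, isPlaneStochastic_iff.2 ⟨fun i j k => (ht i j k).le, ?_⟩⟩
    rw [vadd_eq_add, map_add, map_smul, LinearMap.mem_ker.1 hB, smul_zero, zero_add]
    exact (isPlaneStochastic_iff.1 hU).2

theorem stmt_15 (n : ℕ) (hn : 0 < n) :
    Module.finrank ℝ
      (affineSpan ℝ {A : Fin n → Fin n → Fin n → ℝ | IsPlaneStochastic n A}).direction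
      = n ^ 3 + 2 - 3 * n := by
  have : Nonempty (Fin n) := Fin.pos_iff_nonempty.1 hn
  rw [direction_affineSpan_setOf_isPlaneStochastic hn, finrank_ker_planeSums, Fintype.card_fin]
  ring_nf
end

section
/- The polytope of 2×2×2 line-stochastic tensors has exactly two extreme points, namely the two {0,1}-valued line-stochastic tensors: A with a₁₁₁ = a₂₂₁ = a₁₂₂ = a₂₁₂ = 1 and all other entries 0, and B with a₁₂₁ = a₂₁₁ = a₁₁₂ = a₂₂₂ = 1 and all other entries 0. -/
/-- A `2 × 2 × 2` tensor is line-stochastic: nonnegative and all line sums equal 1. -/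
def IsLineStochastic2 (A : Fin 2 → Fin 2 → Fin 2 → ℝ) : Prop :=
  (∀ i j k, 0 ≤ A i j k) ∧
  (∀ j k, ∑ i, A i j k = 1) ∧
  (∀ i k, ∑ j, A i j k = 1) ∧
  (∀ i j, ∑ k, A i j k = 1)

/-- The tensor with `a₁₁₁ = a₂₂₁ = a₁₂₂ = a₂₁₂ = 1` and all other entries `0`
(indices shifted to start at `0`). -/
noncomputable def tensorA : Fin 2 → Fin 2 → Fin 2 → ℝ :=
  fun i j k =>
    if (i = 0 ∧ j = 0 ∧ k = 0) ∨ (i = 1 ∧ j = 1 ∧ k = 0) ∨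
       (i = 0 ∧ j = 1 ∧ k = 1) ∨ (i = 1 ∧ j = 0 ∧ k = 1) then 1 else 0

/-- The tensor with `a₁₂₁ = a₂₁₁ = a₁₁₂ = a₂₂₂ = 1` and all other entries `0`
(indices shifted to start at `0`). -/
noncomputable def tensorB : Fin 2 → Fin 2 → Fin 2 → ℝ :=
  fun i j k =>
    if (i = 0 ∧ j = 1 ∧ k = 0) ∨ (i = 1 ∧ j = 0 ∧ k = 0) ∨
       (i = 0 ∧ j = 0 ∧ k = 1) ∨ (i = 1 ∧ j = 1 ∧ k = 1) then 1 else 0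

/-!
The line sums leave a single degree of freedom: a line-stochastic tensor is determined by
`t = a₁₁₁`, each entry being `t` or `1 - t` according to the parity of `i + j + k`. So the
polytope is the segment `[A, B]`, and the extreme points of a nondegenerate segment are its
two endpoints.
-/

section Segment

variable {E : Type*} [AddCommGroup E] [Module ℝ E] {a b x : E}

theorem isExtremePt_segment_left (hab : a ≠ b) : IsExtremePt (segment ℝ a b) a := by
  refine ⟨left_mem_segment ℝ a b, ?_⟩
  rw [segment_eq_image_lineMap]
  rintro _ ⟨s, ⟨hs0, -⟩, rfl⟩ _ ⟨u, ⟨hu0, -⟩, rfl⟩ r hr0 hr1 ha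
  have hcombo : r * s + (1 - r) * u = 0 := by
    apply AffineMap.lineMap_injective ℝ hab
    rw [AffineMap.lineMap_apply_zero, ← smul_eq_mul, ← smul_eq_mul,
      Convex.combo_affine_apply (add_sub_cancel r 1)]
    exact ha.symm
  have hs : s = 0 := by nlinarith
  have hu : u = 0 := by nlinarith
  rw [hs, hu]

theorem isExtremePt_segment_iff (hab : a ≠ b) :
    IsExtremePt (segment ℝ a b) x ↔ x = a ∨ x = b := by
  constructor
  · rintro ⟨hx, hext⟩
    rw [segment_eq_image_lineMap] at hx
    obtain ⟨t, ⟨ht0, ht1⟩, rfl⟩ := hx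
    rcases ht0.eq_or_lt with rfl | ht0
    · exact .inl (AffineMap.lineMap_apply_zero a b)
    rcases ht1.eq_or_lt with rfl | ht1
    · exact .inr (AffineMap.lineMap_apply_one a b)
    refine absurd (hext b (right_mem_segment ℝ a b) a (left_mem_segment ℝ a b) t ht0 ht1 ?_).symm
      hab
    rw [AffineMap.lineMap_apply_module, add_comm]
  · rintro (rfl | rfl)
    · exact isExtremePt_segment_left hab
    · rw [segment_symm]
      exact isExtremePt_segment_left hab.symm

end Segment

theorem convex_setOf_isLineStochastic2 : Convex ℝ {X | IsLineStochastic2 X} := by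
  rintro X ⟨hX0, hX1, hX2, hX3⟩ Y ⟨hY0, hY1, hY2, hY3⟩ a b ha hb hab
  refine ⟨fun i j k => ?_, fun j k => ?_, fun i k => ?_, fun i j => ?_⟩
  · simp only [Pi.add_apply, Pi.smul_apply, smul_eq_mul]
    have := hX0 i j k; have := hY0 i j k; positivity
  all_goals
    simp only [Pi.add_apply, Pi.smul_apply, smul_eq_mul, Finset.sum_add_distrib,
      ← Finset.mul_sum, hX1, hX2, hX3, hY1, hY2, hY3, mul_one, hab]

theorem isLineStochastic2_tensorA : IsLineStochastic2 tensorA := by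
  simp only [IsLineStochastic2, Fin.forall_fin_two, Fin.sum_univ_two, tensorA]
  norm_num

theorem isLineStochastic2_tensorB : IsLineStochastic2 tensorB := by
  simp only [IsLineStochastic2, Fin.forall_fin_two, Fin.sum_univ_two, tensorB]
  norm_num

theorem tensorA_ne_tensorB : tensorA ≠ tensorB := fun h => by
  simpa [tensorA, tensorB] using congrFun (congrFun (congrFun h 0) 0) 0

theorem IsLineStochastic2.apply_le_one {X : Fin 2 → Fin 2 → Fin 2 → ℝ}
    (hX : IsLineStochastic2 X) (i j k : Fin 2) : X i j k ≤ 1 := by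
  rw [← hX.2.1 j k]
  exact Finset.single_le_sum (fun i _ => hX.1 i j k) (Finset.mem_univ i)

theorem IsLineStochastic2.eq_smul_tensorA_add_smul_tensorB {X : Fin 2 → Fin 2 → Fin 2 → ℝ}
    (hX : IsLineStochastic2 X) : X = X 0 0 0 • tensorA + (1 - X 0 0 0) • tensorB := by
  obtain ⟨-, h₁, h₂, h₃⟩ := hX
  simp only [Fin.forall_fin_two, Fin.sum_univ_two] at h₁ h₂ h₃
  obtain ⟨⟨_, _⟩, _, _⟩ := h₁
  obtain ⟨⟨_, _⟩, _, _⟩ := h₂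
  obtain ⟨⟨_, _⟩, _, _⟩ := h₃
  funext i j k
  fin_cases i <;> fin_cases j <;> fin_cases k <;> simp [tensorA, tensorB] <;> linarith

theorem setOf_isLineStochastic2_eq_segment :
    {X | IsLineStochastic2 X} = segment ℝ tensorA tensorB := by
  refine subset_antisymm (fun X hX => ?_)
    (convex_setOf_isLineStochastic2.segment_subset isLineStochastic2_tensorA
      isLineStochastic2_tensorB)
  exact ⟨_, _, hX.1 0 0 0, sub_nonneg.2 (hX.apply_le_one 0 0 0), add_sub_cancel _ _,
    hX.eq_smul_tensorA_add_smul_tensorB.symm⟩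

theorem stmt_19 :
    {A : Fin 2 → Fin 2 → Fin 2 → ℝ |
        IsExtremePt {B : Fin 2 → Fin 2 → Fin 2 → ℝ | IsLineStochastic2 B} A}
      = {tensorA, tensorB} := by
  rw [setOf_isLineStochastic2_eq_segment]
  exact Set.ext fun _ => isExtremePt_segment_iff tensorA_ne_tensorB
end
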